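/- arXiv:1912.08009 — 3 statements merged into one kernel-verified Lean document; each statement's English description precedes it below -/
import Mathlib

section
/- For the two-object pick-and-place problem with objects at (x, y_1) and (x, y_2) where y_1 = 0.4, y_2 = 0.7, v_e = 2, the function f(x) = t_{12}(x) − t_{21}(x) (difference of total completion times of the two picking orders) changes sign on the interval [0.4, 1.4]; consequently neither picking order is optimal for all x. -/
/-- Bounds on the unique positive root of `3 d² + 2 c d = k` (with `k > 0`). -/
lemma root_mem (c k d lo hi : ℝ) (hk : 0 < k) (hd : 0 < d)
    (heq : 3 * d ^ 2 + 2 * c * d = k) (hlo : 0 < lo) (hhi : 0 < hi)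
    (h1 : 3 * lo ^ 2 + 2 * c * lo < k) (h2 : k < 3 * hi ^ 2 + 2 * c * hi) :
    lo < d ∧ d < hi := by
  have h3 : 0 < 3 * d + 2 * c := by nlinarith
  constructor
  · nlinarith [mul_pos hlo hd, sq_nonneg (d - lo), sq_nonneg (d + lo)]
  · nlinarith [mul_pos hhi hd, sq_nonneg (d - hi), sq_nonneg (d + hi)]

lemma auxA (d : ℝ) (l : 0.219 < d) (u : d < 0.22) :
    3 * (0.417:ℝ) ^ 2 + 2 * (0.4 - 2 * d) * 0.417 < (0.4 - 2 * d) ^ 2 + 0.49 ∧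
    (0.4 - 2 * d) ^ 2 + 0.49 < 3 * (0.419:ℝ) ^ 2 + 2 * (0.4 - 2 * d) * 0.419 := by
  constructor <;> nlinarith [sq_nonneg (0.4 - 2 * d + 0.04), sq_nonneg (0.4 - 2 * d + 0.038)]

lemma auxB (d : ℝ) (l : 0.35 < d) (u : d < 0.352) :
    3 * (0.40:ℝ) ^ 2 + 2 * (0.4 - 2 * d) * 0.40 < (0.4 - 2 * d) ^ 2 + 0.16 ∧
    (0.4 - 2 * d) ^ 2 + 0.16 < 3 * (0.41:ℝ) ^ 2 + 2 * (0.4 - 2 * d) * 0.41 := by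
  constructor <;> nlinarith [sq_nonneg (0.4 - 2 * d + 0.304), sq_nonneg (0.4 - 2 * d + 0.3)]

lemma auxC (d : ℝ) (l : 0.494 < d) (u : d < 0.496) :
    3 * (0.350:ℝ) ^ 2 + 2 * (1.4 - 2 * d) * 0.350 < (1.4 - 2 * d) ^ 2 + 0.49 ∧
    (1.4 - 2 * d) ^ 2 + 0.49 < 3 * (0.353:ℝ) ^ 2 + 2 * (1.4 - 2 * d) * 0.353 := by
  constructor <;> nlinarith [sq_nonneg (1.4 - 2 * d - 0.408), sq_nonneg (1.4 - 2 * d - 0.412)]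

lemma auxD (d : ℝ) (l : 0.55 < d) (u : d < 0.551) :
    3 * (0.204:ℝ) ^ 2 + 2 * (1.4 - 2 * d) * 0.204 < (1.4 - 2 * d) ^ 2 + 0.16 ∧
    (1.4 - 2 * d) ^ 2 + 0.16 < 3 * (0.207:ℝ) ^ 2 + 2 * (1.4 - 2 * d) * 0.207 := by
  constructor <;> nlinarith [sq_nonneg (1.4 - 2 * d - 0.298), sq_nonneg (1.4 - 2 * d - 0.3)]

/-- `IsTotalTime a b a' b' ve t` holds when `t` is the total completion time of
picking first the object initially at `(a, b)` and then the object initially at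
`(a', b')`, with end-effector speed `ve`, conveyor at unit speed, pick-up and
drop-off at the origin: `t = 2 (d₁ + d₂)` where `d₁, d₂` are the positive
interception times of the two legs. -/
def IsTotalTime (a b a' b' ve t : ℝ) : Prop :=
  ∃ d1 d2 : ℝ, 0 < d1 ∧ (a - d1) ^ 2 + b ^ 2 = ve ^ 2 * d1 ^ 2 ∧
    0 < d2 ∧ (2 * d1 + d2 - a') ^ 2 + b' ^ 2 = ve ^ 2 * d2 ^ 2 ∧
    t = 2 * (d1 + d2)

/-- for objects at (x, 0.4) and (x, 0.7) with v_e = 2, the difference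
f(x) = t₁₂(x) − t₂₁(x) changes sign on [0.4, 1.4]: there are x₁, x₂ in the interval
where picking object 1 first is strictly better, resp. strictly worse. Hence
neither picking order is optimal for all x. -/
theorem greedy_order_not_always_optimal :
    ∃ x₁ x₂ : ℝ, x₁ ∈ Set.Icc (0.4 : ℝ) 1.4 ∧ x₂ ∈ Set.Icc (0.4 : ℝ) 1.4 ∧
      (∀ t12 t21 : ℝ, IsTotalTime x₁ 0.4 x₁ 0.7 2 t12 →
        IsTotalTime x₁ 0.7 x₁ 0.4 2 t21 → t12 < t21) ∧
      (∀ t12 t21 : ℝ, IsTotalTime x₂ 0.4 x₂ 0.7 2 t12 →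
        IsTotalTime x₂ 0.7 x₂ 0.4 2 t21 → t21 < t12) := by
  refine ⟨0.4, 1.4, ⟨le_refl _, by norm_num⟩, ⟨by norm_num, le_refl _⟩, ?_, ?_⟩
  · rintro t12 t21 ⟨d1, d2, hd1, he1, hd2, he2, ht⟩ ⟨f1, f2, hf1, hg1, hf2, hg2, hs⟩
    -- t12 legs at x = 0.4
    obtain ⟨l1, u1⟩ := root_mem 0.4 0.32 d1 0.219 0.22 (by norm_num) hd1
      (by linear_combination -he1) (by norm_num) (by norm_num)
      (by norm_num) (by norm_num)
    obtain ⟨l2, u2⟩ := root_mem (0.4 - 2 * d1) ((0.4 - 2 * d1) ^ 2 + 0.49) d2 0.417 0.419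
      (by positivity) hd2 (by linear_combination -he2) (by norm_num) (by norm_num)
      (auxA d1 l1 u1).1 (auxA d1 l1 u1).2
    -- t21 legs at x = 0.4
    obtain ⟨l3, u3⟩ := root_mem 0.4 0.65 f1 0.35 0.352 (by norm_num) hf1
      (by linear_combination -hg1) (by norm_num) (by norm_num)
      (by norm_num) (by norm_num)
    obtain ⟨l4, u4⟩ := root_mem (0.4 - 2 * f1) ((0.4 - 2 * f1) ^ 2 + 0.16) f2 0.40 0.41
      (by positivity) hf2 (by linear_combination -hg2) (by norm_num) (by norm_num)
      (auxB f1 l3 u3).1 (auxB f1 l3 u3).2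
    rw [ht, hs]; linarith
  · rintro t12 t21 ⟨d1, d2, hd1, he1, hd2, he2, ht⟩ ⟨f1, f2, hf1, hg1, hf2, hg2, hs⟩
    -- t12 legs at x = 1.4
    obtain ⟨l1, u1⟩ := root_mem 1.4 2.12 d1 0.494 0.496 (by norm_num) hd1
      (by linear_combination -he1) (by norm_num) (by norm_num)
      (by norm_num) (by norm_num)
    obtain ⟨l2, u2⟩ := root_mem (1.4 - 2 * d1) ((1.4 - 2 * d1) ^ 2 + 0.49) d2 0.350 0.353
      (by positivity) hd2 (by linear_combination -he2) (by norm_num) (by norm_num)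
      (auxC d1 l1 u1).1 (auxC d1 l1 u1).2
    -- t21 legs at x = 1.4
    obtain ⟨l3, u3⟩ := root_mem 1.4 2.45 f1 0.55 0.551 (by norm_num) hf1
      (by linear_combination -hg1) (by norm_num) (by norm_num)
      (by norm_num) (by norm_num)
    obtain ⟨l4, u4⟩ := root_mem (1.4 - 2 * f1) ((1.4 - 2 * f1) ^ 2 + 0.16) f2 0.204 0.207
      (by positivity) hf2 (by linear_combination -hg2) (by norm_num) (by norm_num)
      (auxD f1 l3 u3).1 (auxD f1 l3 u3).2
    rw [ht, hs]; linarith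
end

section
/- Held–Karp recurrence correctness: let c : Fin n → ℝ≥0 → ℝ≥0 assign to object i and elapsed time t the pick-and-place duration c i t (assumed positive). Define the cost of a picking sequence (a list of distinct objects) recursively by time(nil) = 0 and time(s ++ [i]) = time(s) + c i (time(s)). Define T(U) for each finite set U of objects by T(∅) = 0 and T(U) = min over i ∈ U of (T(U \ {i}) + c i (T(U \ {i}))). Then T(U) equals the minimum of time(s) over all permutations s of U. Note: this requires the monotonicity assumption that t ↦ t + c i t is monotone nondecreasing in t for each i. -/
/-!
Both inequalities go by induction on the last object picked. A sequence for `U` ending in `i`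
is a sequence for `U.erase i` followed by `i`; following the minimising `i` of the recurrence
realises `T U`, and monotonicity of `t ↦ t + c i t` transports the inductive bound
`T (U.erase i) ≤ time(s)` through the last step.
-/

open scoped NNReal

/-- Total completion time of a picking sequence: time(nil) = 0 and
time(s ++ [i]) = time(s) + c i (time(s)). -/
def seqTime {n : ℕ} (c : Fin n → ℝ≥0 → ℝ≥0) (s : List (Fin n)) : ℝ≥0 :=
  s.foldl (fun t i => t + c i t) 0

section HeldKarp

variable {n : ℕ} (c : Fin n → ℝ≥0 → ℝ≥0)

theorem seqTime_append_singleton (s : List (Fin n)) (i : Fin n) :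
    seqTime c (s ++ [i]) = seqTime c s + c i (seqTime c s) := by
  simp [seqTime, List.foldl_append]

theorem le_seqTime_of_heldKarp (hmono : ∀ i, Monotone fun t => t + c i t)
    {T : Finset (Fin n) → ℝ≥0} (hT0 : T ∅ = 0)
    (hTrec : ∀ (U : Finset (Fin n)) (hU : U.Nonempty),
      T U = U.inf' hU fun i => T (U.erase i) + c i (T (U.erase i)))
    {s : List (Fin n)} (hs : s.Nodup) : T s.toFinset ≤ seqTime c s := by
  induction s using List.reverseRecOn with
  | nil => simp [hT0]
  | append_singleton s i ih =>
    have hi : i ∉ s := fun h => by simpa using (List.nodup_append.mp hs).2.2 i h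
    have herase : (s ++ [i]).toFinset.erase i = s.toFinset := by
      simpa [List.toFinset_append] using Finset.erase_insert (List.mem_toFinset.not.mpr hi)
    have hmem : i ∈ (s ++ [i]).toFinset := by simp
    calc T (s ++ [i]).toFinset ≤ T s.toFinset + c i (T s.toFinset) := by
          rw [hTrec _ ⟨i, hmem⟩, ← herase]
          exact Finset.inf'_le _ hmem
      _ ≤ seqTime c s + c i (seqTime c s) := hmono i (ih (List.nodup_append.mp hs).1)
      _ = seqTime c (s ++ [i]) := (seqTime_append_singleton c s i).symm

theorem exists_seqTime_eq_of_heldKarp {T : Finset (Fin n) → ℝ≥0} (hT0 : T ∅ = 0)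
    (hTrec : ∀ (U : Finset (Fin n)) (hU : U.Nonempty),
      T U = U.inf' hU fun i => T (U.erase i) + c i (T (U.erase i)))
    (U : Finset (Fin n)) : ∃ s : List (Fin n), s.Nodup ∧ s.toFinset = U ∧ T U = seqTime c s := by
  induction U using Finset.strongInduction with
  | _ U ih =>
    rcases U.eq_empty_or_nonempty with rfl | hU
    · exact ⟨[], List.nodup_nil, rfl, hT0⟩
    obtain ⟨i, hi, hTi⟩ := Finset.exists_mem_eq_inf' hU
      fun i => T (U.erase i) + c i (T (U.erase i))
    obtain ⟨s, hs, hsU, hTs⟩ := ih (U.erase i) (Finset.erase_ssubset hi)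
    have his : i ∉ s := fun h => by simpa [hsU] using List.mem_toFinset.mpr h
    refine ⟨s ++ [i], ?_, ?_, ?_⟩
    · exact List.nodup_append.mpr ⟨hs, List.nodup_singleton i,
        by simpa using fun a ha (h : a = i) => his (h ▸ ha)⟩
    · simpa [List.toFinset_append, hsU] using Finset.insert_erase hi
    · rw [seqTime_append_singleton, ← hTs, hTrec U hU, hTi]

end HeldKarp

theorem heldKarp_correct_general {n : ℕ} (c : Fin n → ℝ≥0 → ℝ≥0)
    (hmono : ∀ i, Monotone fun t => t + c i t)
    (T : Finset (Fin n) → ℝ≥0)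
    (hT0 : T ∅ = 0)
    (hTrec : ∀ (U : Finset (Fin n)) (hU : U.Nonempty),
      T U = U.inf' hU fun i => T (U.erase i) + c i (T (U.erase i))) :
    ∀ U : Finset (Fin n),
      IsLeast {t : ℝ≥0 | ∃ s : List (Fin n), s.Nodup ∧ s.toFinset = U ∧ t = seqTime c s}
        (T U) := by
  intro U
  refine ⟨exists_seqTime_eq_of_heldKarp c hT0 hTrec U, ?_⟩
  rintro _ ⟨s, hs, rfl, rfl⟩
  exact le_seqTime_of_heldKarp c hmono hT0 hTrec hs

/-- Held–Karp recurrence correctness: if `c i t > 0` for all `i, t`,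
each completion map `t ↦ t + c i t` is monotone, and `T` satisfies the
Held–Karp recurrence `T ∅ = 0`,
`T U = min_{i ∈ U} (T (U \ {i}) + c i (T (U \ {i})))`, then `T U` is the minimum
of `time(s)` over all permutations `s` of `U` (sequences of distinct elements
whose underlying set is `U`). -/
theorem heldKarp_correct {n : ℕ} (c : Fin n → ℝ≥0 → ℝ≥0)
    (hpos : ∀ i t, 0 < c i t)
    (hmono : ∀ i, Monotone fun t => t + c i t)
    (T : Finset (Fin n) → ℝ≥0)
    (hT0 : T ∅ = 0)
    (hTrec : ∀ (U : Finset (Fin n)) (hU : U.Nonempty),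
      T U = U.inf' hU fun i => T (U.erase i) + c i (T (U.erase i))) :
    ∀ U : Finset (Fin n),
      IsLeast {t : ℝ≥0 | ∃ s : List (Fin n), s.Nodup ∧ s.toFinset = U ∧ t = seqTime c s}
        (T U) :=
  heldKarp_correct_general c hmono T hT0 hTrec
end

section
/- With the same setup as the Held–Karp recurrence, if for each object i the completion map t ↦ t + c i t is monotone nondecreasing, then for every set U and every permutation s of U, T(U) ≤ time(s); i.e., the dynamic programming value is a lower bound on every sequence's total time, achieved by some permutation. -/
/-!
Peel off the last object `i` of a sequence `s ++ [i]`: the recurrence gives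
`T U ≤ T (U \ {i}) + c i (T (U \ {i}))`, and monotonicity of `t ↦ t + c i t` lets the
inductive bound `T (U \ {i}) ≤ time s` pass through the last step. Conversely, appending
a minimiser of the recurrence to an optimal sequence for `U \ {i}` attains `T U`.
-/

open scoped NNReal

theorem List.toFinset_append_singleton {α : Type*} [DecidableEq α] (l : List α) (a : α) :
    (l ++ [a]).toFinset = insert a l.toFinset := by
  rw [List.toFinset_append, Finset.union_comm]
  rfl

theorem List.nodup_append_singleton {α : Type*} {l : List α} {a : α} :
    (l ++ [a]).Nodup ↔ l.Nodup ∧ a ∉ l := by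
  rw [← List.concat_eq_append, List.nodup_concat, and_comm]

section HeldKarp

variable {n : ℕ} (c : Fin n → ℝ≥0 → ℝ≥0)

@[simp]
theorem seqTime_nil : seqTime c [] = 0 := rfl

variable {c} {T : Finset (Fin n) → ℝ≥0}
  (hTrec : ∀ (U : Finset (Fin n)) (hU : U.Nonempty),
    T U = U.inf' hU fun i => T (U.erase i) + c i (T (U.erase i)))
include hTrec

theorem heldKarp_le_of_mem {U : Finset (Fin n)} {i : Fin n} (hi : i ∈ U) :
    T U ≤ T (U.erase i) + c i (T (U.erase i)) := by
  rw [hTrec U ⟨i, hi⟩]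
  exact Finset.inf'_le _ hi

theorem exists_mem_heldKarp_eq {U : Finset (Fin n)} (hU : U.Nonempty) :
    ∃ i ∈ U, T U = T (U.erase i) + c i (T (U.erase i)) := by
  rw [hTrec U hU]
  exact Finset.exists_mem_eq_inf' hU _

theorem heldKarp_le_seqTime (hmono : ∀ i, Monotone fun t => t + c i t) (hT0 : T ∅ = 0)
    {s : List (Fin n)} (hs : s.Nodup) : T s.toFinset ≤ seqTime c s := by
  induction s using List.reverseRecOn with
  | nil => simp [hT0]
  | append_singleton s i ih =>
    obtain ⟨hs, hi⟩ := List.nodup_append_singleton.mp hs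
    have herase : (insert i s.toFinset).erase i = s.toFinset :=
      Finset.erase_insert (mt List.mem_toFinset.mp hi)
    calc T (s ++ [i]).toFinset
        ≤ T s.toFinset + c i (T s.toFinset) := by
          simpa only [List.toFinset_append_singleton, herase]
            using heldKarp_le_of_mem hTrec (Finset.mem_insert_self i s.toFinset)
      _ ≤ seqTime c s + c i (seqTime c s) := hmono i (ih hs)
      _ = seqTime c (s ++ [i]) := (seqTime_append_singleton c s i).symm

theorem exists_nodup_seqTime_eq_heldKarp (hT0 : T ∅ = 0) (U : Finset (Fin n)) :
    ∃ s : List (Fin n), s.Nodup ∧ s.toFinset = U ∧ seqTime c s = T U := by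
  induction U using Finset.strongInduction with
  | H U ih =>
    rcases U.eq_empty_or_nonempty with rfl | hU
    · exact ⟨[], List.nodup_nil, rfl, hT0.symm⟩
    obtain ⟨i, hi, hTi⟩ := exists_mem_heldKarp_eq hTrec hU
    obtain ⟨s, hs, hsU, hsT⟩ := ih _ (Finset.erase_ssubset hi)
    have hi' : i ∉ s := fun h => Finset.notMem_erase i U (hsU ▸ List.mem_toFinset.mpr h)
    refine ⟨s ++ [i], List.nodup_append_singleton.mpr ⟨hs, hi'⟩, ?_, ?_⟩
    · rw [List.toFinset_append_singleton, hsU, Finset.insert_erase hi]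
    · rw [seqTime_append_singleton, hsT, hTi]

end HeldKarp

/-- under the monotone completion-time assumption, the Held–Karp value
`T U` is a lower bound on the total time of every permutation of `U`, and is
achieved by some permutation of `U`. -/
theorem heldKarp_lower_bound {n : ℕ} (c : Fin n → ℝ≥0 → ℝ≥0)
    (hmono : ∀ i, Monotone fun t => t + c i t)
    (T : Finset (Fin n) → ℝ≥0)
    (hT0 : T ∅ = 0)
    (hTrec : ∀ (U : Finset (Fin n)) (hU : U.Nonempty),
      T U = U.inf' hU fun i => T (U.erase i) + c i (T (U.erase i))) :
    ∀ U : Finset (Fin n),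
      (∀ s : List (Fin n), s.Nodup → s.toFinset = U → T U ≤ seqTime c s) ∧
      (∃ s : List (Fin n), s.Nodup ∧ s.toFinset = U ∧ seqTime c s = T U) := by
  intro U
  refine ⟨?_, exists_nodup_seqTime_eq_heldKarp hTrec hT0 U⟩
  rintro s hs rfl
  exact heldKarp_le_seqTime hTrec hmono hT0 hs
end
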